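/- For all n, m, h ≥ 1: if an inverse semigroup (S,·,⁻¹) satisfies the semigroup identity v_{n,m}^{(h)} ≈ (v_{n,m}^{(h)})², then it satisfies the inverse semigroup identity w_n^{(h)} ≈ (w_n^{(h)})². -/

import Mathlib

universe u v

/-- An inverse semigroup: every element has a unique (generalized) inverse. -/
class InverseSemigroup (S : Type*) extends Semigroup S, Inv S where
  mul_inv_mul : ∀ x : S, x * x⁻¹ * x = x
  inv_mul_inv : ∀ x : S, x⁻¹ * x * x⁻¹ = x⁻¹
  inv_unique : ∀ x y : S, x * y * x = x → y * x * y = y → y = x⁻¹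

/-- Evaluation of a (nonempty) word, given as a list of variables, in a magma with an
explicit binary operation; the empty word evaluates to `none`. -/
def wEval {ι S : Type*} (mul : S → S → S) (ρ : ι → S) : List ι → Option S
  | [] => none
  | a :: l => some (l.foldl (fun s i => mul s (ρ i)) (ρ a))

/-- The word `u_{n,k,m} = x₁⋯x_{n+k}(xₙ⋯x₁·x_{n+1}⋯x_{n+k})^{2m-1}` (variables 0-indexed). -/
def uWord (n k m : ℕ) : List ℕ :=
  List.range (n + k) ++
    (List.replicate (2 * m - 1) ((List.range n).reverse ++ List.range' n k)).flatten

/-- The words `v_{n,m}^{(h)}` (`h ≥ 1`), over variables indexed by `h`-tuples from `{0,…,2n-1}`: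
`v_{n,m}^{(1)} = u_{n,n,m}`, and `v_{n,m}^{(h+1)}` is obtained by substituting, for the `j`-th
variable of `v_{n,m}^{(1)}`, the copy of `v_{n,m}^{(h)}` whose variables get `j` appended. -/
def vWord (n m : ℕ) : ℕ → List (List ℕ)
  | 0 => []
  | 1 => (uWord n n m).map (fun i => [i])
  | h + 2 => (uWord n n m).flatMap (fun j => (vWord n m (h + 1)).map (fun xs => xs ++ [j]))

/-- Formal inverse of a word in letters `(variable, inverted?)`. -/
def invFree (w : List (List ℕ × Bool)) : List (List ℕ × Bool) :=
  w.reverse.map (fun p => (p.1, !p.2))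

/-- The letter sequence of the `{·,⁻¹}`-term `w_n^{(h)}` (`h ≥ 1`), letters being pairs
`(variable, inverted?)` with variables indexed by `h`-tuples from `{0,…,n-1}`. -/
def wLetters (n : ℕ) : ℕ → List (List ℕ × Bool)
  | 0 => []
  | 1 => (List.range n).map (fun i => ([i], false)) ++ (List.range n).map (fun i => ([i], true))
  | h + 2 =>
    ((List.range n).map (fun j => (wLetters n (h + 1)).map (fun p => (p.1 ++ [j], p.2)))).flatten
      ++ ((List.range n).map
        (fun j => invFree ((wLetters n (h + 1)).map (fun p => (p.1 ++ [j], p.2))))).flatten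

/-- Evaluation of a (nonempty) word in letters `(variable, inverted?)`, with explicit
multiplication and inversion operations; the empty word evaluates to `none`. -/
def letterEval {S : Type*} (mul : S → S → S) (inv : S → S) (ρ : List ℕ → S) :
    List (List ℕ × Bool) → Option S
  | [] => none
  | p :: l =>
    some (l.foldl (fun s q => mul s (if q.2 then inv (ρ q.1) else ρ q.1))
      (if p.2 then inv (ρ p.1) else ρ p.1))

/-!
Adjoin an identity to `S` and evaluate everything in the inverse monoid `WithOne S`. Substituting
`a₁, …, aₙ, a₁⁻¹, …, aₙ⁻¹` for `x₁, …, x₂ₙ` in `v_{n,m}^{(1)}` gives `p c⁻¹ (c c⁻¹)^{2m-1} = p c⁻¹`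
with `p = a₁⋯aₙ`, `c = aₙ⋯a₁`, because `c c⁻¹` is idempotent and `c⁻¹ c c⁻¹ = c⁻¹`; and `p c⁻¹` is
the value of `w_n^{(1)}` at `a`. Since the values of `w_n^{(h)}` are closed under inversion
(reverse the order of the `aⱼ`), induction on `h` shows that every value of `w_n^{(h)}` is a value
of `v_{n,m}^{(h)}`, so it is idempotent whenever `v_{n,m}^{(h)} ≈ (v_{n,m}^{(h)})²` holds.
-/

namespace InverseSemigroup

variable {S : Type*} [InverseSemigroup S]

instance : InvolutiveInv S where
  inv_inv x := (inv_unique x⁻¹ x (inv_mul_inv x) (mul_inv_mul x)).symm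

theorem isIdempotentElem_mul_inv (x : S) : IsIdempotentElem (x * x⁻¹) := by
  rw [IsIdempotentElem, ← mul_assoc, mul_inv_mul]

theorem isIdempotentElem_inv_mul (x : S) : IsIdempotentElem (x⁻¹ * x) := by
  rw [IsIdempotentElem, ← mul_assoc, inv_mul_inv]

theorem inv_eq_self_of_isIdempotentElem {e : S} (he : IsIdempotentElem e) : e⁻¹ = e :=
  (inv_unique e e (by rw [he.eq, he.eq]) (by rw [he.eq, he.eq])).symm

/-- The inverse `a` of `e * f` satisfies `f * a * e = a` by uniqueness of inverses, so `a` is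
idempotent, and then `e * f = a⁻¹ = a`. -/
theorem isIdempotentElem_mul {e f : S} (he : IsIdempotentElem e) (hf : IsIdempotentElem f) :
    IsIdempotentElem (e * f) := by
  set a := (e * f)⁻¹ with ha_def
  have ha_inv : ∀ x, a * (e * (f * (a * x))) = a * x := fun x => by
    simpa only [mul_assoc] using congrArg (· * x) (inv_mul_inv (e * f))
  have ha : f * a * e = a := by
    refine inv_unique (e * f) (f * a * e) ?_ ?_
    · simpa only [mul_assoc, he.mul_self_mul, hf.mul_self_mul] using mul_inv_mul (e * f)
    · simp only [mul_assoc, he.mul_self_mul, hf.mul_self_mul, ha_inv]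
  have ha_idem : IsIdempotentElem a :=
    calc a * a = f * a * e * (f * a * e) := by rw [ha]
      _ = a := by simp only [mul_assoc, ha_inv]; simp only [← mul_assoc, ha]
  have hef : e * f = a := by rw [← inv_eq_self_of_isIdempotentElem ha_idem, ha_def, inv_inv]
  rw [hef]
  exact ha_idem

theorem commute_of_isIdempotentElem {e f : S} (he : IsIdempotentElem e)
    (hf : IsIdempotentElem f) : Commute e f := by
  have hef := isIdempotentElem_mul he hf
  have hfe := isIdempotentElem_mul hf he
  have : f * e = (e * f)⁻¹ := by
    refine inv_unique (e * f) (f * e) ?_ ?_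
    · simpa only [mul_assoc, he.mul_self_mul, hf.mul_self_mul] using hef.eq
    · simpa only [mul_assoc, he.mul_self_mul, hf.mul_self_mul] using hfe.eq
  rw [Commute, SemiconjBy, this, inv_eq_self_of_isIdempotentElem hef]

protected theorem mul_inv_rev (x y : S) : (x * y)⁻¹ = y⁻¹ * x⁻¹ := by
  have hc : Commute (y * y⁻¹) (x⁻¹ * x) :=
    commute_of_isIdempotentElem (isIdempotentElem_mul_inv y) (isIdempotentElem_inv_mul x)
  refine (inv_unique _ _ ?_ ?_).symm
  · calc x * y * (y⁻¹ * x⁻¹) * (x * y) = x * (y * y⁻¹ * (x⁻¹ * x)) * y := by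
          simp only [mul_assoc]
      _ = x * x⁻¹ * x * (y * y⁻¹ * y) := by rw [hc.eq]; simp only [mul_assoc]
      _ = x * y := by rw [mul_inv_mul, mul_inv_mul]
  · calc y⁻¹ * x⁻¹ * (x * y) * (y⁻¹ * x⁻¹) = y⁻¹ * (x⁻¹ * x * (y * y⁻¹)) * x⁻¹ := by
          simp only [mul_assoc]
      _ = y⁻¹ * y * y⁻¹ * (x⁻¹ * x * x⁻¹) := by rw [← hc.eq]; simp only [mul_assoc]
      _ = y⁻¹ * x⁻¹ := by rw [inv_mul_inv, inv_mul_inv]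

instance : DivisionMonoid (WithOne S) where
  mul_inv_rev a b := by
    cases a using WithOne.recOneCoe <;> cases b using WithOne.recOneCoe <;>
      simp only [one_mul, mul_one, inv_one, ← WithOne.coe_mul, ← WithOne.coe_inv,
        InverseSemigroup.mul_inv_rev]
  inv_eq_of_mul a b hab := by
    cases a using WithOne.recOneCoe with
    | one => rw [one_mul] at hab; rw [hab, inv_one]
    | coe a =>
      cases b using WithOne.recOneCoe with
      | one => exact absurd hab WithOne.coe_ne_one
      | coe b => exact absurd hab WithOne.coe_ne_one

theorem withOne_mul_inv_mul (x : WithOne S) : x * x⁻¹ * x = x := by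
  cases x using WithOne.recOneCoe with
  | one => simp
  | coe x =>
    rw [← WithOne.coe_inv, ← WithOne.coe_mul, ← WithOne.coe_mul, InverseSemigroup.mul_inv_mul]

theorem withOne_inv_mul_pow_mul_inv (c : WithOne S) (k : ℕ) : c⁻¹ * (c * c⁻¹) ^ k = c⁻¹ := by
  induction k with
  | zero => rw [pow_zero, mul_one]
  | succ k ih =>
    rw [pow_succ, ← mul_assoc, ih, ← mul_assoc]
    simpa using withOne_mul_inv_mul c⁻¹

end InverseSemigroup

open InverseSemigroup

theorem List.prod_inv_reverse_of_divisionMonoid {M : Type*} [DivisionMonoid M] (L : List M) :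
    L.prod⁻¹ = (L.map fun x => x⁻¹).reverse.prod := by
  induction L with
  | nil => simp
  | cons x L ih => simp [ih]

theorem exists_append_singleton_eq {α : Type*} (f : ℕ → List ℕ → α) :
    ∃ g : List ℕ → α, ∀ j xs, g (xs ++ [j]) = f j xs :=
  ⟨fun ys => f (ys.getLastD 0) ys.dropLast, by simp⟩

/-- The value of `w_n^{(1)}` at `a`. -/
def wProd {M : Type*} [Monoid M] [Inv M] (n : ℕ) (a : ℕ → M) : M :=
  ((List.range n).map a).prod * ((List.range n).map fun j => (a j)⁻¹).prod

theorem wProd_inv {M : Type*} [DivisionMonoid M] (n : ℕ) (a : ℕ → M) :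
    (wProd n a)⁻¹ = wProd n fun j => a (n - 1 - j) := by
  have hrev : (List.range n).reverse = (List.range n).map (fun j => n - 1 - j) := by
    simpa [List.range_eq_range'] using List.reverse_range' (s := 0) (n := n)
  simp only [wProd, mul_inv_rev, List.prod_inv_reverse_of_divisionMonoid, List.map_map,
    ← List.map_reverse, hrev, Function.comp_def, inv_inv]

section Evaluation

variable {ι S : Type*} [Semigroup S]

theorem coe_foldl_mul (ρ : ι → S) (l : List ι) (x : S) :
    ((l.foldl (fun s i => s * ρ i) x : S) : WithOne S) =
      x * (l.map fun i => (ρ i : WithOne S)).prod := by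
  induction l generalizing x with
  | nil => simp
  | cons i l ih => simp [ih, mul_assoc]

theorem wEval_eq_prod (ρ : ι → S) (l : List ι) :
    (wEval (· * ·) ρ l : WithOne S) = (l.map fun i => (ρ i : WithOne S)).prod := by
  cases l with
  | nil => rfl
  | cons i l =>
    rw [List.map_cons, List.prod_cons]
    exact coe_foldl_mul ρ l (ρ i)

theorem letterEval_eq_prod [Inv S] (σ : List ℕ → S) (w : List (List ℕ × Bool)) :
    (letterEval (· * ·) (·⁻¹) σ w : WithOne S) =
      (w.map fun p => if p.2 then (σ p.1 : WithOne S)⁻¹ else σ p.1).prod := by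
  have : letterEval (· * ·) (·⁻¹) σ w =
      wEval (· * ·) (fun p => if p.2 then (σ p.1)⁻¹ else σ p.1) w := by
    cases w <;> rfl
  rw [this, wEval_eq_prod]
  simp only [apply_ite, WithOne.coe_inv]
  rfl

/-- The value of `v_{n,m}^{(h)}` under `ρ`, where `v_{n,m}^{(0)}` is taken to be the single
variable `x_[]`, so that the recursion `vValue_succ` also holds at `h = 0`. -/
def vValue (n m : ℕ) (ρ : List ℕ → S) : ℕ → WithOne S
  | 0 => ρ []
  | h + 1 => wEval (· * ·) ρ (vWord n m (h + 1))

/-- As `vValue`, for `w_n^{(h)}`. -/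
def wValue [Inv S] (n : ℕ) (σ : List ℕ → S) : ℕ → WithOne S
  | 0 => σ []
  | h + 1 => letterEval (· * ·) (·⁻¹) σ (wLetters n (h + 1))

theorem vValue_succ (n m h : ℕ) (ρ : List ℕ → S) :
    vValue n m ρ (h + 1) =
      ((uWord n n m).map fun j => vValue n m (fun xs => ρ (xs ++ [j])) h).prod := by
  cases h with
  | zero => simp [vValue, vWord, wEval_eq_prod, Function.comp_def]
  | succ h =>
    simp [vValue, vWord, wEval_eq_prod, List.prod_flatten, List.flatMap_def, List.map_flatten,
      Function.comp_def]

end Evaluation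

section Values

variable {S : Type*} [InverseSemigroup S]

theorem wValue_succ (n h : ℕ) (σ : List ℕ → S) :
    wValue n σ (h + 1) = wProd n (fun j => wValue n (fun xs => σ (xs ++ [j])) h) := by
  cases h with
  | zero => simp [wValue, wLetters, letterEval_eq_prod, wProd, Function.comp_def]
  | succ h =>
    simp [wValue, wLetters, letterEval_eq_prod, wProd, List.prod_flatten, List.map_flatten,
      invFree, Function.comp_def, List.prod_inv_reverse_of_divisionMonoid, List.map_reverse,
      apply_ite, ← Bool.not_eq_true, ite_not]

theorem prod_map_uWord (n m : ℕ) (a : ℕ → WithOne S) :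
    ((uWord n n m).map fun j => if j < n then a j else (a (j - n))⁻¹).prod = wProd n a := by
  set b : ℕ → WithOne S := fun j => if j < n then a j else (a (j - n))⁻¹
  set c := ((List.range n).map a).reverse.prod
  have hlow : (List.range n).map b = (List.range n).map a :=
    List.map_congr_left fun j hj => if_pos (List.mem_range.1 hj)
  have hhigh : ((List.range' n n).map b).prod = c⁻¹ := by
    simp [b, c, List.range'_eq_map_range, List.prod_inv_reverse_of_divisionMonoid,
      Function.comp_def]
  have hloop : ((List.range n).reverse.map b).prod = c := by rw [List.map_reverse, hlow]
  have hw : wProd n a = ((List.range n).map a).prod * c⁻¹ := by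
    simp [wProd, c, List.prod_inv_reverse_of_divisionMonoid, Function.comp_def]
  rw [hw, uWord, List.range_add, ← List.range'_eq_map_range]
  simp only [List.map_append, List.prod_append, List.map_flatten, List.map_replicate,
    List.prod_flatten, List.prod_replicate, hlow, hhigh, hloop]
  rw [mul_assoc, withOne_inv_mul_pow_mul_inv]

theorem exists_wValue_eq_inv (n h : ℕ) (σ : List ℕ → S) :
    ∃ σ' : List ℕ → S, wValue n σ' h = (wValue n σ h)⁻¹ := by
  cases h with
  | zero => exact ⟨fun xs => (σ xs)⁻¹, WithOne.coe_inv _⟩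
  | succ h =>
    obtain ⟨σ', hσ'⟩ := exists_append_singleton_eq fun j xs => σ (xs ++ [n - 1 - j])
    refine ⟨σ', ?_⟩
    simp only [wValue_succ, wProd_inv, hσ']

theorem exists_vValue_eq_wValue (n m : ℕ) :
    ∀ (h : ℕ) (σ : List ℕ → S), ∃ ρ : List ℕ → S, vValue n m ρ h = wValue n σ h
  | 0, σ => ⟨σ, rfl⟩
  | h + 1, σ => by
    set W := fun j => wValue n (fun xs => σ (xs ++ [j])) h
    have hW : ∀ j, ∃ τ : List ℕ → S,
        vValue n m τ h = if j < n then W j else (W (j - n))⁻¹ := by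
      intro j
      split_ifs
      · exact exists_vValue_eq_wValue n m h _
      · obtain ⟨σ', hσ'⟩ := exists_wValue_eq_inv n h fun xs => σ (xs ++ [j - n])
        rw [← hσ']
        exact exists_vValue_eq_wValue n m h σ'
    choose τ hτ using hW
    obtain ⟨ρ, hρ⟩ := exists_append_singleton_eq τ
    refine ⟨ρ, ?_⟩
    simp only [vValue_succ, wValue_succ, hρ, hτ]
    exact prod_map_uWord n m W

end Values

theorem w_identity_of_v_identity {S : Type u} [InverseSemigroup S] (n m h : ℕ)
    (hv : ∀ ρ : List ℕ → S,
      wEval (· * ·) ρ (vWord n m h) = wEval (· * ·) ρ (vWord n m h ++ vWord n m h)) :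
    ∀ ρ : List ℕ → S,
      letterEval (· * ·) (·⁻¹) ρ (wLetters n h) =
        letterEval (· * ·) (·⁻¹) ρ (wLetters n h ++ wLetters n h) := by
  intro σ
  cases h with
  | zero => rfl
  | succ h =>
    obtain ⟨ρ, hρ⟩ := exists_vValue_eq_wValue n m (h + 1) σ
    have hidem : IsIdempotentElem (wValue n σ (h + 1)) := by
      have hvρ := (hv ρ).symm
      rw [← hρ, IsIdempotentElem, vValue]
      simp only [wEval_eq_prod, List.map_append, List.prod_append] at hvρ ⊢
      exact hvρ
    rw [IsIdempotentElem, wValue] at hidem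
    simp only [letterEval_eq_prod, List.map_append, List.prod_append] at hidem ⊢
    exact hidem.symm
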